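/- Let W be an N×N real matrix with nonnegative entries and α > 0 with α·ρ(W) < 1, let z ∈ ℝ^N have nonnegative entries with at least one strictly positive entry, and let Q be an N×N real symmetric matrix with nonnegative entries, Q·1 = 1, and such that there exists λ ∈ [0,1) with ‖Qv‖ ≤ λ‖v‖ for all v with 1ᵀv = 0. Let x(0) ∈ ℝ^N and define the cascade: c(t+1) = α Wᵀ c(t) + z; c̄(t+1) = Q c̄(t) + (c(t+1) − c(t)); y_i(t+1) = y_i(t) if c̄_i(t+1) = 0 and y_i(t+1) = (c_i(t+1)/c̄_i(t+1) − 1)·x_i(0) otherwise; x(t+1) = Q x(t) + (y(t+1) − y(t)); with c(0) = c̄(0) = z and y(0) = 0. Then y(t) converges to the vector with entries γ_i = ((ρ_α)_i / ρ̄_α − 1)·x_i(0), and x(t) converges to x*·1 where x* = (ρ_αᵀ x(0)) / (ρ_αᵀ 1) is the α-centrality–weighted average of the initial conditions. -/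

import Mathlib

open Filter

open Topology Matrix
open scoped ENNReal NNReal

/-- The Euclidean norm of a vector in `ℝ^N`. -/
noncomputable def eNorm {N : ℕ} (v : Fin N → ℝ) : ℝ :=
  Real.sqrt (∑ i, v i ^ 2)

/-- The spectral radius of a real square matrix: the supremum of the absolute
values of the (complex) eigenvalues of its complexification. -/
noncomputable def specRad {N : ℕ} (W : Matrix (Fin N) (Fin N) ℝ) : ℝ :=
  sSup {r : ℝ | ∃ μ ∈ spectrum ℂ (W.map (Complex.ofReal · )), r = ‖μ‖}

lemma eNorm_eq {N : ℕ} (v : Fin N → ℝ) :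
    eNorm v = ‖(WithLp.equiv 2 (Fin N → ℝ)).symm v‖ := by
  rw [EuclideanSpace.norm_eq]
  unfold eNorm
  congr 1
  apply Finset.sum_congr rfl
  intro i _
  rw [Real.norm_eq_abs, sq_abs]
  rfl

lemma eNorm_nonneg {N : ℕ} (v : Fin N → ℝ) : 0 ≤ eNorm v :=
  Real.sqrt_nonneg _

lemma eNorm_add_le {N : ℕ} (u v : Fin N → ℝ) :
    eNorm (u + v) ≤ eNorm u + eNorm v := by
  simp only [eNorm_eq]
  have : (WithLp.equiv 2 (Fin N → ℝ)).symm (u + v)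
      = (WithLp.equiv 2 (Fin N → ℝ)).symm u + (WithLp.equiv 2 (Fin N → ℝ)).symm v := rfl
  rw [this]; exact norm_add_le _ _

lemma abs_le_eNorm {N : ℕ} (v : Fin N → ℝ) (i : Fin N) : |v i| ≤ eNorm v := by
  rw [← Real.sqrt_sq_eq_abs]
  apply Real.sqrt_le_sqrt
  exact Finset.single_le_sum (f := fun j => v j ^ 2) (fun j _ => sq_nonneg _) (Finset.mem_univ i)

lemma eNorm_tendsto_zero {N : ℕ} (v : ℕ → Fin N → ℝ)
    (h : ∀ i, Tendsto (fun t => v t i) atTop (𝓝 0)) :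
    Tendsto (fun t => eNorm (v t)) atTop (𝓝 0) := by
  unfold eNorm
  have hsum : Tendsto (fun t => ∑ i, v t i ^ 2) atTop (𝓝 0) := by
    have := tendsto_finset_sum (Finset.univ : Finset (Fin N))
      (fun i _ => ((h i).pow 2))
    simpa using this
  have := (Real.continuous_sqrt.tendsto 0).comp hsum
  simpa [Function.comp_def] using this

/-- Contraction lemma. -/
lemma tendsto_zero_of_contraction (lam : ℝ) (h0 : 0 ≤ lam) (h1 : lam < 1)
    (a b : ℕ → ℝ) (han : ∀ t, 0 ≤ a t) (hrec : ∀ t, a (t + 1) ≤ lam * a t + b t)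
    (hb : Tendsto b atTop (𝓝 0)) : Tendsto a atTop (𝓝 0) := by
  rw [Metric.tendsto_atTop]
  intro ε hε
  have hε2 : 0 < (1 - lam) * (ε / 2) := by nlinarith
  rw [Metric.tendsto_atTop] at hb
  obtain ⟨T, hT⟩ := hb _ hε2
  have hbd : ∀ t ≥ T, b t ≤ (1 - lam) * (ε / 2) := by
    intro t ht
    have := hT t ht
    rw [Real.dist_eq, sub_zero] at this
    exact (le_abs_self _).trans this.le
  have key : ∀ k, a (T + k) ≤ lam ^ k * a T + ε / 2 := by
    intro k
    induction k with
    | zero => simp [han T]; linarith [hε]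
    | succ k ih =>
      have h2 := hrec (T + k)
      have h3 := hbd (T + k) (Nat.le_add_right _ _)
      have : a (T + (k + 1)) = a (T + k + 1) := by ring_nf
      rw [this]
      calc a (T + k + 1) ≤ lam * a (T + k) + b (T + k) := h2
        _ ≤ lam * (lam ^ k * a T + ε / 2) + (1 - lam) * (ε / 2) := by
            have := mul_le_mul_of_nonneg_left ih h0
            linarith
        _ = lam ^ (k + 1) * a T + ε / 2 := by ring
  have hpow : Tendsto (fun k => lam ^ k * a T) atTop (𝓝 0) := by
    have := tendsto_pow_atTop_nhds_zero_of_lt_one h0 h1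
    simpa using this.mul_const (a T)
  rw [Metric.tendsto_atTop] at hpow
  obtain ⟨K, hK⟩ := hpow (ε / 2) (by positivity)
  refine ⟨T + K, fun t ht => ?_⟩
  obtain ⟨k, rfl⟩ := Nat.exists_eq_add_of_le ht
  have hKk : dist (lam ^ (K + k) * a T) 0 < ε / 2 := hK _ (Nat.le_add_right _ _)
  rw [Real.dist_eq, sub_zero] at hKk ⊢
  have h4 : a (T + (K + k)) ≤ lam ^ (K + k) * a T + ε / 2 := by
    have := key (K + k); linarith [this]
  have h5 : lam ^ (K + k) * a T < ε / 2 := lt_of_abs_lt hKk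
  rw [abs_of_nonneg (han _)]
  have : T + K + k = T + (K + k) := by ring
  rw [this]; linarith

lemma pow_entry_tendsto_zero {N : ℕ} (A : Matrix (Fin N) (Fin N) ℝ)
    (h : ∀ μ ∈ spectrum ℂ (A.map (Complex.ofReal ·)), ‖μ‖ < 1) (i j : Fin N) :
    Tendsto (fun t => (A ^ t) i j) atTop (𝓝 0) := by
  haveI : Nonempty (Fin N) := ⟨i⟩
  letI : NormedRing (Matrix (Fin N) (Fin N) ℂ) := Matrix.linftyOpNormedRing
  letI : NormedAlgebra ℂ (Matrix (Fin N) (Fin N) ℂ) := Matrix.linftyOpNormedAlgebra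
  haveI : CompleteSpace (Matrix (Fin N) (Fin N) ℂ) := FiniteDimensional.complete ℂ _
  set B : Matrix (Fin N) (Fin N) ℂ := A.map (Complex.ofReal ·) with hBdef
  have hB : spectralRadius ℂ B < 1 := by
    have := spectrum.spectralRadius_lt_of_forall_lt (a := B) (r := 1)
      (fun μ hμ => by
        have := h μ hμ
        exact_mod_cast this)
    simpa using this
  obtain ⟨r, hr1, hr2⟩ := exists_between hB
  have hrtop : r ≠ ⊤ := (hr2.trans_le le_top).ne
  set rr : ℝ := r.toReal with hrrdef
  have hrr1 : rr < 1 := by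
    have := (ENNReal.toReal_lt_toReal hrtop ENNReal.one_ne_top).mpr hr2
    simpa using this
  have hrr0 : 0 ≤ rr := ENNReal.toReal_nonneg
  have hgel := spectrum.pow_nnnorm_pow_one_div_tendsto_nhds_spectralRadius B
  have hev : ∀ᶠ n : ℕ in atTop, (‖B ^ n‖₊ : ℝ≥0∞) ^ (1 / (n : ℝ)) < r :=
    hgel.eventually_lt_const hr1
  have hev2 : ∀ᶠ n : ℕ in atTop, ‖B ^ n‖ ≤ rr ^ n := by
    filter_upwards [hev, eventually_ge_atTop 1] with n hn hn1
    have hne : (n : ℝ) ≠ 0 := by positivity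
    have h1 : (‖B ^ n‖₊ : ℝ≥0∞) ≤ r ^ n := by
      have := ENNReal.rpow_le_rpow hn.le (by positivity : (0:ℝ) ≤ (n : ℝ))
      rwa [← ENNReal.rpow_mul, one_div, inv_mul_cancel₀ hne, ENNReal.rpow_one,
        ENNReal.rpow_natCast] at this
    have h2 : ((‖B ^ n‖₊ : ℝ≥0∞)).toReal ≤ (r ^ n).toReal :=
      ENNReal.toReal_mono (by simp [ENNReal.pow_ne_top hrtop]) h1
    rwa [ENNReal.coe_toReal, coe_nnnorm, ENNReal.toReal_pow] at h2
  have hentry : ∀ᶠ n : ℕ in atTop, ‖(A ^ n) i j‖ ≤ rr ^ n := by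
    filter_upwards [hev2] with n hn
    have hBn : B ^ n = (A ^ n).map (Complex.ofReal ·) := by
      have : B = (Complex.ofRealHom.mapMatrix : Matrix (Fin N) (Fin N) ℝ →+* _) A := rfl
      rw [this, ← map_pow]
      rfl
    have habs : ‖(A ^ n) i j‖ = ‖(B ^ n) i j‖ := by
      rw [hBn]
      simp [Matrix.map_apply, Complex.norm_real, Real.norm_eq_abs]
    rw [habs]
    have hv : ‖(Pi.single j 1 : Fin N → ℂ)‖ = 1 := by
      rw [Pi.norm_single]; exact norm_one
    have hsingle : (B ^ n) i j = ((B ^ n) *ᵥ (Pi.single j 1 : Fin N → ℂ)) i := by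
      rw [Matrix.mulVec_single]
      simp
    rw [hsingle]
    calc ‖((B ^ n) *ᵥ (Pi.single j 1 : Fin N → ℂ)) i‖
        ≤ ‖(B ^ n) *ᵥ (Pi.single j 1 : Fin N → ℂ)‖ := by apply norm_le_pi_norm
      _ ≤ ‖B ^ n‖ * ‖(Pi.single j 1 : Fin N → ℂ)‖ := Matrix.linfty_opNorm_mulVec _ _
      _ = ‖B ^ n‖ := by rw [hv, mul_one]
      _ ≤ rr ^ n := hn
  exact squeeze_zero_norm' hentry (tendsto_pow_atTop_nhds_zero_of_lt_one hrr0 hrr1)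

lemma spectrum_transpose {N : ℕ} (M : Matrix (Fin N) (Fin N) ℂ) :
    spectrum ℂ M.transpose = spectrum ℂ M := by
  ext x
  simp only [spectrum.mem_iff]
  have key : ∀ y : Matrix (Fin N) (Fin N) ℂ,
      IsUnit (algebraMap ℂ (Matrix (Fin N) (Fin N) ℂ) x - yᵀ) ↔
      IsUnit (algebraMap ℂ (Matrix (Fin N) (Fin N) ℂ) x - y) := by
    intro y
    have h1 : algebraMap ℂ (Matrix (Fin N) (Fin N) ℂ) x - yᵀ
        = (algebraMap ℂ (Matrix (Fin N) (Fin N) ℂ) x - y)ᵀ := by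
      rw [Matrix.transpose_sub, Algebra.algebraMap_eq_smul_one,
        Matrix.transpose_smul, Matrix.transpose_one]
    rw [h1, Matrix.isUnit_iff_isUnit_det, Matrix.det_transpose,
      ← Matrix.isUnit_iff_isUnit_det]
  rw [key]

lemma spec_bound {N : ℕ} (W : Matrix (Fin N) (Fin N) ℝ) (α : ℝ) (hα : 0 < α)
    (hspec : α * specRad W < 1) :
    ∀ μ ∈ spectrum ℂ ((α • W.transpose).map (Complex.ofReal ·)), ‖μ‖ < 1 := by
  intro μ hμ
  have hmap : (α • W.transpose).map (Complex.ofReal ·)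
      = (α : ℂ) • (W.map (Complex.ofReal ·))ᵀ := by
    ext i j
    simp [Matrix.map_apply, Matrix.smul_apply, Matrix.transpose_apply]
  rw [hmap] at hμ
  have hαne : ((α : ℂ)) ≠ 0 := by exact_mod_cast hα.ne'
  rw [show ((α:ℂ) • (W.map (Complex.ofReal ·))ᵀ)
        = (Units.mk0 (α:ℂ) hαne : ℂˣ) • (W.map (Complex.ofReal ·))ᵀ from rfl,
    spectrum.unit_smul_eq_smul, spectrum_transpose] at hμ
  obtain ⟨ν, hν, rfl⟩ := hμ
  simp only [Units.smul_def, Units.val_mk0, smul_eq_mul]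
  have hbdd : BddAbove {r : ℝ | ∃ μ ∈ spectrum ℂ (W.map (Complex.ofReal ·)), r = ‖μ‖} := by
    have hfin : ((‖·‖) '' spectrum ℂ (W.map (Complex.ofReal ·))).Finite :=
      (Matrix.finite_spectrum _).image _
    have heq : {r : ℝ | ∃ μ ∈ spectrum ℂ (W.map (Complex.ofReal ·)), r = ‖μ‖}
        = (‖·‖) '' spectrum ℂ (W.map (Complex.ofReal ·)) := by
      ext r; simp [Set.mem_image, eq_comm]
    rw [heq]
    exact hfin.bddAbove
  have hle : ‖ν‖ ≤ specRad W := le_csSup hbdd ⟨ν, hν, rfl⟩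
  rw [norm_mul, Complex.norm_real, Real.norm_eq_abs, abs_of_pos hα]
  calc α * ‖ν‖ ≤ α * specRad W :=
        mul_le_mul_of_nonneg_left hle hα.le
    _ < 1 := hspec

lemma det_isUnit {N : ℕ} (W : Matrix (Fin N) (Fin N) ℝ) (α : ℝ) (hα : 0 < α)
    (hspec : α * specRad W < 1) : IsUnit (1 - α • W.transpose).det := by
  have hb := spec_bound W α hα hspec
  have h1 : (1 : ℂ) ∉ spectrum ℂ ((α • W.transpose).map (Complex.ofReal ·)) := by
    intro hmem
    have := hb 1 hmem
    simp at this
  have h2 := spectrum.notMem_iff.mp h1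
  rw [_root_.map_one] at h2
  have h3 : ((1 : Matrix (Fin N) (Fin N) ℂ) - (α • W.transpose).map (Complex.ofReal ·))
      = (Complex.ofRealHom.mapMatrix : Matrix (Fin N) (Fin N) ℝ →+* _) (1 - α • W.transpose) := by
    rw [map_sub, RingHom.map_one]
    rfl
  rw [h3, Matrix.isUnit_iff_isUnit_det, ← RingHom.map_det] at h2
  rw [isUnit_iff_ne_zero]
  intro hz
  rw [hz] at h2
  simp at h2

/-- Convergence of the influence-based weighted consensus cascade: the
correction inputs `y(t)` converge to `γ_i = ((ρ_α)_i/ρ̄_α − 1)·x_i(0)` and the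
states `x(t)` converge to the α-centrality–weighted average
`x* = (ρ_αᵀ x(0))/(ρ_αᵀ 1)` of the initial conditions. -/
theorem weighted_consensus_cascade_converges
    {N : ℕ} (W : Matrix (Fin N) (Fin N) ℝ)
    (hWnn : ∀ i j, 0 ≤ W i j)
    (α : ℝ) (hα : 0 < α) (hspec : α * specRad W < 1)
    (z : Fin N → ℝ) (hznn : ∀ i, 0 ≤ z i) (hzpos : ∃ i, 0 < z i)
    (Q : Matrix (Fin N) (Fin N) ℝ)
    (hQnn : ∀ i j, 0 ≤ Q i j)
    (hQsymm : Q.transpose = Q)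
    (hQone : Q.mulVec (fun _ => (1 : ℝ)) = fun _ => (1 : ℝ))
    (lam : ℝ) (hlam0 : 0 ≤ lam) (hlam1 : lam < 1)
    (hcontract : ∀ v : Fin N → ℝ, (∑ i, v i) = 0 →
      eNorm (Q.mulVec v) ≤ lam * eNorm v)
    (x0 : Fin N → ℝ)
    (c cbar y x : ℕ → Fin N → ℝ)
    (hc0 : c 0 = z) (hcbar0 : cbar 0 = z) (hy0 : y 0 = 0) (hx0 : x 0 = x0)
    (hc : ∀ t, c (t + 1) = α • (W.transpose.mulVec (c t)) + z)
    (hcbar : ∀ t, cbar (t + 1) = Q.mulVec (cbar t) + (c (t + 1) - c t))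
    (hy : ∀ t i, y (t + 1) i =
      if cbar (t + 1) i = 0 then y t i
      else (c (t + 1) i / cbar (t + 1) i - 1) * x0 i)
    (hx : ∀ t, x (t + 1) = Q.mulVec (x t) + (y (t + 1) - y t)) :
    Tendsto y atTop
      (nhds (fun i =>
        ((1 - α • W.transpose)⁻¹.mulVec z i /
          ((∑ j, (1 - α • W.transpose)⁻¹.mulVec z j) / (N : ℝ)) - 1) * x0 i)) ∧
    Tendsto x atTop
      (nhds (fun _ =>
        (∑ i, (1 - α • W.transpose)⁻¹.mulVec z i * x0 i) /
          (∑ i, (1 - α • W.transpose)⁻¹.mulVec z i))) := by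
  classical
  obtain ⟨i₀, hi₀⟩ := hzpos
  have hN : 0 < N := i₀.pos
  have hNne : (N : ℝ) ≠ 0 := by positivity
  set A : Matrix (Fin N) (Fin N) ℝ := α • W.transpose with hAdef
  have hdet : IsUnit (1 - A).det := det_isUnit W α hα hspec
  set ρ : Fin N → ℝ := (1 - A)⁻¹.mulVec z with hρdef
  -- fixed point
  have hfix : ∀ i, A.mulVec ρ i + z i = ρ i := by
    have h1 : (1 - A).mulVec ρ = z := by
      rw [hρdef, Matrix.mulVec_mulVec, Matrix.mul_nonsing_inv _ hdet, Matrix.one_mulVec]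
    intro i
    have := congrFun h1 i
    rw [Matrix.sub_mulVec, Matrix.one_mulVec] at this
    simp only [Pi.sub_apply] at this
    linarith
  -- c recursion via A
  have hcA : ∀ t, c (t + 1) = A.mulVec (c t) + z := by
    intro t
    rw [hc t, hAdef, Matrix.smul_mulVec]
  -- c t - ρ = A^t *ᵥ (z - ρ)
  have hcf : ∀ t, c t - ρ = (A ^ t).mulVec (z - ρ) := by
    intro t
    induction t with
    | zero => rw [hc0, pow_zero, Matrix.one_mulVec]
    | succ t ih =>
      have hstep : c (t + 1) - ρ = A.mulVec (c t - ρ) := by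
        funext i
        rw [hcA t, Matrix.mulVec_sub]
        have := hfix i
        simp only [Pi.sub_apply, Pi.add_apply]
        linarith
      rw [hstep, ih, Matrix.mulVec_mulVec, ← pow_succ']
  -- convergence of c
  have hApow : ∀ i j, Tendsto (fun t => (A ^ t) i j) atTop (𝓝 0) :=
    fun i j => pow_entry_tendsto_zero A (spec_bound W α hα hspec) i j
  have hctend : ∀ i, Tendsto (fun t => c t i) atTop (𝓝 (ρ i)) := by
    intro i
    have h1 : ∀ t, c t i = ρ i + ∑ j, (A ^ t) i j * (z j - ρ j) := by
      intro t
      have h2 := congrFun (hcf t) i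
      simp only [Pi.sub_apply, Matrix.mulVec, dotProduct] at h2
      linarith [h2]
    have h3 : Tendsto (fun t => ρ i + ∑ j, (A ^ t) i j * (z j - ρ j)) atTop (𝓝 (ρ i)) := by
      have h4 : Tendsto (fun t => ∑ j, (A ^ t) i j * (z j - ρ j)) atTop (𝓝 0) := by
        have := tendsto_finset_sum (Finset.univ : Finset (Fin N))
          (fun j _ => (hApow i j).mul_const (z j - ρ j))
        simpa using this
      simpa using tendsto_const_nhds.add h4
    exact h3.congr (fun t => (h1 t).symm)
  -- nonnegativity and lower bound by z
  have hcnn : ∀ t i, 0 ≤ c t i := by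
    intro t
    induction t with
    | zero => intro i; rw [hc0]; exact hznn i
    | succ t ih =>
      intro i
      rw [hc t]
      simp only [Pi.add_apply, Pi.smul_apply, smul_eq_mul]
      have : 0 ≤ W.transpose.mulVec (c t) i := by
        simp only [Matrix.mulVec, dotProduct]
        exact Finset.sum_nonneg fun j _ =>
          mul_nonneg (hWnn j i) (ih j)
      have := mul_nonneg hα.le this
      linarith [hznn i]
  have hclb : ∀ t i, z i ≤ c t i := by
    intro t i
    cases t with
    | zero => rw [hc0]
    | succ t =>
      rw [hc t]
      simp only [Pi.add_apply, Pi.smul_apply, smul_eq_mul]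
      have h5 : 0 ≤ W.transpose.mulVec (c t) i := by
        simp only [Matrix.mulVec, dotProduct]
        exact Finset.sum_nonneg fun j _ => mul_nonneg (hWnn j i) (hcnn t j)
      nlinarith
  have hρlb : ∀ i, z i ≤ ρ i := fun i =>
    ge_of_tendsto (hctend i) (Eventually.of_forall fun t => hclb t i)
  have hsumρ : 0 < ∑ j, ρ j := by
    have hz : 0 < ∑ j, z j :=
      Finset.sum_pos' (fun j _ => hznn j) ⟨i₀, Finset.mem_univ i₀, hi₀⟩
    have : ∑ j, z j ≤ ∑ j, ρ j := Finset.sum_le_sum fun j _ => hρlb j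
    linarith
  set ρb : ℝ := (∑ j, ρ j) / N with hρbdef
  have hρb : 0 < ρb := by
    rw [hρbdef]; positivity
  -- Q row/col sums
  have hQrow : ∀ i, ∑ j, Q i j = 1 := by
    intro i
    have := congrFun hQone i
    simpa [Matrix.mulVec, dotProduct] using this
  have hQsym' : ∀ i j, Q i j = Q j i := by
    intro i j
    have := congrFun (congrFun hQsymm j) i
    simpa [Matrix.transpose_apply] using this
  have hQcol : ∀ j, ∑ i, Q i j = 1 := by
    intro j
    calc ∑ i, Q i j = ∑ i, Q j i := Finset.sum_congr rfl fun i _ => hQsym' i j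
      _ = 1 := hQrow j
  have hsumQ : ∀ v : Fin N → ℝ, ∑ i, Q.mulVec v i = ∑ i, v i := by
    intro v
    simp only [Matrix.mulVec, dotProduct]
    rw [Finset.sum_comm]
    refine Finset.sum_congr rfl fun j _ => ?_
    rw [← Finset.sum_mul, hQcol j, one_mul]
  -- mean sequence
  set m : ℕ → ℝ := fun t => (∑ i, c t i) / N with hmdef
  have hmtend : Tendsto m atTop (𝓝 ρb) := by
    rw [hρbdef]
    exact (tendsto_finset_sum _ fun i _ => hctend i).div_const _
  have hsumcbar : ∀ t, ∑ i, cbar t i = ∑ i, c t i := by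
    intro t
    induction t with
    | zero => rw [hcbar0, hc0]
    | succ t ih =>
      rw [hcbar t]
      simp only [Pi.add_apply, Pi.sub_apply]
      rw [Finset.sum_add_distrib, Finset.sum_sub_distrib, hsumQ, ih]
      ring
  set u : ℕ → Fin N → ℝ := fun t i => cbar t i - m t with hudef
  have husum : ∀ t, ∑ i, u t i = 0 := by
    intro t
    simp only [hudef, Finset.sum_sub_distrib, Finset.sum_const, Finset.card_univ,
      Fintype.card_fin, nsmul_eq_mul, hsumcbar, hmdef]
    field_simp
    ring
  set d : ℕ → Fin N → ℝ := fun t i => (c (t + 1) i - c t i) - (m (t + 1) - m t) with hddef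
  have hQmean : ∀ (v : Fin N → ℝ) (r : ℝ) (i : Fin N),
      Q.mulVec (fun j => v j - r) i = Q.mulVec v i - r := by
    intro v r i
    simp only [Matrix.mulVec, dotProduct, mul_sub]
    rw [Finset.sum_sub_distrib, ← Finset.sum_mul, hQrow i, one_mul]
  have hurec : ∀ t, u (t + 1) = Q.mulVec (u t) + d t := by
    intro t
    funext i
    have h1 : Q.mulVec (u t) i = Q.mulVec (cbar t) i - m t := hQmean (cbar t) (m t) i
    have h2 := congrFun (hcbar t) i
    simp only [Pi.add_apply, Pi.sub_apply] at h2
    simp only [hudef, hddef, Pi.add_apply]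
    rw [h1, h2]
    ring
  have hdtend : Tendsto (fun t => eNorm (d t)) atTop (𝓝 0) := by
    apply eNorm_tendsto_zero
    intro i
    have hc1 : Tendsto (fun t => c (t + 1) i) atTop (𝓝 (ρ i)) :=
      (hctend i).comp (tendsto_add_atTop_nat 1)
    have hm1 : Tendsto (fun t => m (t + 1)) atTop (𝓝 ρb) :=
      hmtend.comp (tendsto_add_atTop_nat 1)
    have := ((hc1.sub (hctend i)).sub (hm1.sub hmtend))
    simpa [hddef] using this
  have hulen : ∀ t, eNorm (u (t + 1)) ≤ lam * eNorm (u t) + eNorm (d t) := by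
    intro t
    rw [hurec t]
    calc eNorm (Q.mulVec (u t) + d t)
        ≤ eNorm (Q.mulVec (u t)) + eNorm (d t) := eNorm_add_le _ _
      _ ≤ lam * eNorm (u t) + eNorm (d t) := by
          have := hcontract (u t) (husum t); linarith
  have hutend0 : Tendsto (fun t => eNorm (u t)) atTop (𝓝 0) :=
    tendsto_zero_of_contraction lam hlam0 hlam1 _ _ (fun t => eNorm_nonneg _) hulen hdtend
  have hui : ∀ i, Tendsto (fun t => u t i) atTop (𝓝 0) := by
    intro i
    exact squeeze_zero_norm (fun t => abs_le_eNorm (u t) i) hutend0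
  have hcbartend : ∀ i, Tendsto (fun t => cbar t i) atTop (𝓝 ρb) := by
    intro i
    have h1 : (fun t => cbar t i) = fun t => u t i + m t := by
      funext t; simp [hudef]
    rw [h1]
    simpa using (hui i).add hmtend
  -- y convergence
  set γ : Fin N → ℝ := fun i => (ρ i / ρb - 1) * x0 i with hγdef
  have hytend : ∀ i, Tendsto (fun t => y t i) atTop (𝓝 (γ i)) := by
    intro i
    have hg : Tendsto (fun t => (c t i / cbar t i - 1) * x0 i) atTop (𝓝 (γ i)) := by
      rw [hγdef]
      exact (((hctend i).div (hcbartend i) hρb.ne').sub tendsto_const_nhds).mul_const _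
    have hne : ∀ᶠ t in atTop, cbar t i ≠ 0 := (hcbartend i).eventually_ne hρb.ne'
    obtain ⟨T, hT⟩ := eventually_atTop.mp hne
    apply Tendsto.congr' _ hg
    rw [EventuallyEq, eventually_atTop]
    refine ⟨T + 1, fun t ht => ?_⟩
    obtain ⟨k, rfl⟩ := Nat.exists_eq_add_of_le ht
    have heq : T + 1 + k = (T + k) + 1 := by ring
    rw [heq, hy (T + k) i, if_neg (hT ((T + k) + 1) (by omega))]
  -- x convergence
  set s : ℕ → ℝ := fun t => ∑ i, x t i with hsdef
  have hsy : ∀ t, s t = ∑ i, x0 i + ∑ i, y t i := by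
    intro t
    induction t with
    | zero => simp [hsdef, hx0, hy0]
    | succ t ih =>
      have h1 : s (t + 1) = s t + ((∑ i, y (t + 1) i) - ∑ i, y t i) := by
        simp only [hsdef, hx t, Pi.add_apply, Pi.sub_apply]
        rw [Finset.sum_add_distrib, Finset.sum_sub_distrib, hsumQ]
      rw [h1, ih]; ring
  have hytends : Tendsto (fun t => ∑ i, y t i) atTop (𝓝 (∑ i, γ i)) :=
    tendsto_finset_sum _ fun i _ => hytend i
  have hstend : Tendsto s atTop (𝓝 (∑ i, x0 i + ∑ i, γ i)) := by
    have : s = fun t => ∑ i, x0 i + ∑ i, y t i := funext hsy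
    rw [this]
    exact tendsto_const_nhds.add hytends
  set w : ℕ → Fin N → ℝ := fun t i => x t i - s t / N with hwdef
  have hwsum : ∀ t, ∑ i, w t i = 0 := by
    intro t
    simp only [hwdef, Finset.sum_sub_distrib, Finset.sum_const, Finset.card_univ,
      Fintype.card_fin, nsmul_eq_mul, hsdef]
    field_simp
    ring
  set e : ℕ → Fin N → ℝ := fun t i => (y (t + 1) i - y t i) - (s (t + 1) / N - s t / N)
    with hedef
  have hwrec : ∀ t, w (t + 1) = Q.mulVec (w t) + e t := by
    intro t
    funext i
    have h1 : Q.mulVec (w t) i = Q.mulVec (x t) i - s t / N := hQmean (x t) (s t / N) i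
    have h2 := congrFun (hx t) i
    simp only [Pi.add_apply, Pi.sub_apply] at h2
    simp only [hwdef, hedef, Pi.add_apply]
    rw [h1, h2]
    ring
  have hetend : Tendsto (fun t => eNorm (e t)) atTop (𝓝 0) := by
    apply eNorm_tendsto_zero
    intro i
    have hy1 : Tendsto (fun t => y (t + 1) i) atTop (𝓝 (γ i)) :=
      (hytend i).comp (tendsto_add_atTop_nat 1)
    have hs1 : Tendsto (fun t => s (t + 1)) atTop (𝓝 (∑ i, x0 i + ∑ i, γ i)) :=
      hstend.comp (tendsto_add_atTop_nat 1)
    have := (hy1.sub (hytend i)).sub ((hs1.div_const (N : ℝ)).sub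
      (hstend.div_const (N : ℝ)))
    simpa [hedef] using this
  have hwlen : ∀ t, eNorm (w (t + 1)) ≤ lam * eNorm (w t) + eNorm (e t) := by
    intro t
    rw [hwrec t]
    calc eNorm (Q.mulVec (w t) + e t)
        ≤ eNorm (Q.mulVec (w t)) + eNorm (e t) := eNorm_add_le _ _
      _ ≤ lam * eNorm (w t) + eNorm (e t) := by
          have := hcontract (w t) (hwsum t); linarith
  have hwtend0 : Tendsto (fun t => eNorm (w t)) atTop (𝓝 0) :=
    tendsto_zero_of_contraction lam hlam0 hlam1 _ _ (fun t => eNorm_nonneg _) hwlen hetend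
  have hwi : ∀ i, Tendsto (fun t => w t i) atTop (𝓝 0) := by
    intro i
    exact squeeze_zero_norm (fun t => abs_le_eNorm (w t) i) hwtend0
  have hxtend : ∀ i, Tendsto (fun t => x t i) atTop
      (𝓝 ((∑ i, x0 i + ∑ i, γ i) / N)) := by
    intro i
    have h1 : (fun t => x t i) = fun t => w t i + s t / N := by
      funext t; simp [hwdef]
    rw [h1]
    simpa using (hwi i).add (hstend.div_const (N : ℝ))
  -- final algebra
  have hsumγ : ∑ i, γ i = (∑ i, ρ i * x0 i) / ρb - ∑ i, x0 i := by
    simp only [hγdef, sub_mul, one_mul, div_mul_eq_mul_div]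
    rw [Finset.sum_sub_distrib, Finset.sum_div]
  have halg : (∑ i, x0 i + ∑ i, γ i) / N = (∑ i, ρ i * x0 i) / (∑ i, ρ i) := by
    rw [hsumγ]
    have hNρb : (N : ℝ) * ρb = ∑ j, ρ j := by
      rw [hρbdef]; field_simp
    rw [← hNρb]
    field_simp
    ring
  constructor
  · rw [tendsto_pi_nhds]
    intro i
    exact hytend i
  · rw [tendsto_pi_nhds]
    intro i
    rw [← halg]
    exact hxtend i
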